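/- Let (ξ*, η*) ∈ ℝ^{d+1} × ℝ^{n+1} satisfy ξ₀* = −η₀* ≠ 0, ξ̄* = 0, η̄* = 0, and let τ₀ > 0, R > 0. Then there exist ε > 0 and δ > 0 (depending on θ, ω, ξ₀*, τ₀, R) such that for every (ξ,η) with |ξ − ξ*| + |η − η*| < δ, every X ∈ ℝ^{d+1}, Y ∈ ℝ^{n+1} with X₀ + Y₀ = 0 and |X| + |Y| ≤ R, and every τ ≥ τ₀: |(X + τθ)·ξ − (Y + τω)·η| ≥ ε τ. -/

import Mathlib

/-!
At `(ξ*, η*)` only the `0`-th coordinates of `x = X + τθ` and `y = Y + τω` enter the phase, and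
since `X₀ + Y₀ = 0` and `ξ₀* = -η₀*` it equals exactly `τ (θ₀ + ω₀) ξ₀*`, of size `c τ` with
`c = |ξ₀*| |θ₀ + ω₀| > 0`. Moving to `(ξ, η)` changes the phase by at most
`(R + τ)(|ξ - ξ*| + |η - η*|)` (Cauchy–Schwarz), and `(R + τ) ≤ (R / τ₀ + 1) τ` for `τ ≥ τ₀`, so
`δ = c τ₀ / (2 (R + τ₀))` keeps the error below `c τ / 2`.
-/

/-- The tail `ξ̄ = (ξ₁, …, ξ_m)` of a vector `ξ = (ξ₀, ξ̄) ∈ ℝ^{m+1}`. -/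
noncomputable def tailVec {m : ℕ} (ξ : EuclideanSpace ℝ (Fin (m + 1))) :
    EuclideanSpace ℝ (Fin m) := WithLp.toLp 2 (fun i : Fin m => ξ i.succ)

open RealInnerProductSpace

lemma inner_eq_mul_of_tailVec_eq_zero {m : ℕ} {ζ : EuclideanSpace ℝ (Fin (m + 1))}
    (hζ : tailVec ζ = 0) (v : EuclideanSpace ℝ (Fin (m + 1))) : ⟪v, ζ⟫ = v 0 * ζ 0 := by
  have htail : ∀ i : Fin m, ζ i.succ = 0 := fun i => by
    simpa [tailVec] using congrArg (fun w => w i) hζ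
  simp [PiLp.inner_apply, Fin.sum_univ_succ, htail, mul_comm]

lemma phase_eq_of_tailVec_eq_zero {d n : ℕ}
    {ξs θ X : EuclideanSpace ℝ (Fin (d + 1))} {ηs ω Y : EuclideanSpace ℝ (Fin (n + 1))}
    (hξs : tailVec ξs = 0) (hηs : tailVec ηs = 0) (h0 : ξs 0 = -ηs 0) (hXY : X 0 + Y 0 = 0)
    (τ : ℝ) : ⟪X + τ • θ, ξs⟫ - ⟪Y + τ • ω, ηs⟫ = τ * (θ 0 + ω 0) * ξs 0 := by
  rw [inner_eq_mul_of_tailVec_eq_zero hξs, inner_eq_mul_of_tailVec_eq_zero hηs]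
  simp only [PiLp.add_apply, PiLp.smul_apply, smul_eq_mul, h0]
  linear_combination (-ηs 0) * hXY

lemma norm_add_smul_le_of_norm_eq_one {E : Type*} [SeminormedAddCommGroup E] [NormedSpace ℝ E]
    {u : E} (hu : ‖u‖ = 1) (v : E) {t : ℝ} (ht : 0 ≤ t) : ‖v + t • u‖ ≤ ‖v‖ + t := by
  simpa [norm_smul, hu, abs_of_nonneg ht] using norm_add_le v (t • u)

lemma abs_inner_sub_inner_sub_le {E F : Type*} [NormedAddCommGroup E] [InnerProductSpace ℝ E]
    [NormedAddCommGroup F] [InnerProductSpace ℝ F] {x : E} {y : F} {K : ℝ}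
    (hx : ‖x‖ ≤ K) (hy : ‖y‖ ≤ K) (ξ ξs : E) (η ηs : F) :
    |(⟪x, ξ⟫ - ⟪y, η⟫) - (⟪x, ξs⟫ - ⟪y, ηs⟫)| ≤ K * (‖ξ - ξs‖ + ‖η - ηs‖) := by
  have hξ : |⟪x, ξ - ξs⟫| ≤ K * ‖ξ - ξs‖ :=
    (abs_real_inner_le_norm _ _).trans (mul_le_mul_of_nonneg_right hx (norm_nonneg _))
  have hη : |⟪y, η - ηs⟫| ≤ K * ‖η - ηs‖ :=
    (abs_real_inner_le_norm _ _).trans (mul_le_mul_of_nonneg_right hy (norm_nonneg _))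
  calc |(⟪x, ξ⟫ - ⟪y, η⟫) - (⟪x, ξs⟫ - ⟪y, ηs⟫)| = |⟪x, ξ - ξs⟫ - ⟪y, η - ηs⟫| := by
        rw [inner_sub_right, inner_sub_right]; ring_nf
    _ ≤ |⟪x, ξ - ξs⟫| + |⟪y, η - ηs⟫| := abs_sub _ _
    _ ≤ K * (‖ξ - ξs‖ + ‖η - ηs‖) := by linarith

lemma add_mul_div_le_of_le {R τ₀ τ c : ℝ} (hR : 0 ≤ R) (hτ₀ : 0 < τ₀) (hτ : τ₀ ≤ τ)
    (hc : 0 ≤ c) : (R + τ) * (c * τ₀ / (2 * (R + τ₀))) ≤ c / 2 * τ := by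
  rw [mul_div_assoc', div_le_iff₀ (by positivity)]
  nlinarith [mul_le_mul_of_nonneg_left hτ (mul_nonneg hc hR)]

theorem phase_lower_bound_near_C1_general
    (d n : ℕ)
    (θ : EuclideanSpace ℝ (Fin (d + 1))) (ω : EuclideanSpace ℝ (Fin (n + 1)))
    (hθ : ‖θ‖ = 1) (hω : ‖ω‖ = 1) (hnontang : θ 0 + ω 0 ≠ 0)
    (ξs : EuclideanSpace ℝ (Fin (d + 1))) (ηs : EuclideanSpace ℝ (Fin (n + 1)))
    (h0 : ξs 0 = -ηs 0) (h0ne : ξs 0 ≠ 0)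
    (hbarξ : tailVec ξs = 0) (hbarη : tailVec ηs = 0)
    (τ₀ R : ℝ) (hτ₀ : 0 < τ₀) (hR : 0 < R) :
    ∃ ε > (0 : ℝ), ∃ δ > (0 : ℝ),
      ∀ (ξ : EuclideanSpace ℝ (Fin (d + 1))) (η : EuclideanSpace ℝ (Fin (n + 1))),
        ‖ξ - ξs‖ + ‖η - ηs‖ < δ →
        ∀ (X : EuclideanSpace ℝ (Fin (d + 1))) (Y : EuclideanSpace ℝ (Fin (n + 1))),
          X 0 + Y 0 = 0 → ‖X‖ + ‖Y‖ ≤ R →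
          ∀ τ : ℝ, τ₀ ≤ τ →
            ε * τ ≤ |(inner ℝ (X + τ • θ) ξ : ℝ) - (inner ℝ (Y + τ • ω) η : ℝ)| := by
  set c := |ξs 0| * |θ 0 + ω 0|
  have hc : 0 < c := mul_pos (abs_pos.mpr h0ne) (abs_pos.mpr hnontang)
  refine ⟨c / 2, by positivity, c * τ₀ / (2 * (R + τ₀)), by positivity, ?_⟩
  intro ξ η hδ X Y hXY hXYR τ hτ
  have hτ0 : 0 ≤ τ := hτ₀.le.trans hτ
  set x := X + τ • θ
  set y := Y + τ • ω
  have hx : ‖x‖ ≤ R + τ :=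
    (norm_add_smul_le_of_norm_eq_one hθ X hτ0).trans (by linarith [norm_nonneg Y])
  have hy : ‖y‖ ≤ R + τ :=
    (norm_add_smul_le_of_norm_eq_one hω Y hτ0).trans (by linarith [norm_nonneg X])
  have hbase : |⟪x, ξs⟫ - ⟪y, ηs⟫| = c * τ := by
    rw [phase_eq_of_tailVec_eq_zero hbarξ hbarη h0 hXY, abs_mul, abs_mul, abs_of_nonneg hτ0]
    ring
  have hpert := abs_inner_sub_inner_sub_le hx hy ξ ξs η ηs
  rw [abs_sub_comm] at hpert
  have hsmall : (R + τ) * (‖ξ - ξs‖ + ‖η - ηs‖) ≤ c / 2 * τ :=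
    (mul_le_mul_of_nonneg_left hδ.le (by linarith)).trans
      (add_mul_div_le_of_le hR.le hτ₀ hτ hc.le)
  linarith [abs_sub_abs_le_abs_sub (⟪x, ξs⟫ - ⟪y, ηs⟫) (⟪x, ξ⟫ - ⟪y, η⟫)]

/-- near a point `(ξ*, η*)` with `ξ₀* = −η₀* ≠ 0`, `ξ̄* = 0`, `η̄* = 0`, the
phase `x·ξ − y·η` (with `x = X + τθ`, `y = Y + τω`) satisfies `|x·ξ − y·η| ≥ ε τ` uniformly
over `|X| + |Y| ≤ R`, `X₀ + Y₀ = 0`, and `τ ≥ τ₀`. -/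
theorem phase_lower_bound_near_C1
    (d n : ℕ) (hd : 1 ≤ d) (hn : 1 ≤ n)
    (θ : EuclideanSpace ℝ (Fin (d + 1))) (ω : EuclideanSpace ℝ (Fin (n + 1)))
    (hθ : ‖θ‖ = 1) (hω : ‖ω‖ = 1) (hnontang : θ 0 + ω 0 ≠ 0)
    (ξs : EuclideanSpace ℝ (Fin (d + 1))) (ηs : EuclideanSpace ℝ (Fin (n + 1)))
    (h0 : ξs 0 = -ηs 0) (h0ne : ξs 0 ≠ 0)
    (hbarξ : tailVec ξs = 0) (hbarη : tailVec ηs = 0)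
    (τ₀ R : ℝ) (hτ₀ : 0 < τ₀) (hR : 0 < R) :
    ∃ ε > (0 : ℝ), ∃ δ > (0 : ℝ),
      ∀ (ξ : EuclideanSpace ℝ (Fin (d + 1))) (η : EuclideanSpace ℝ (Fin (n + 1))),
        ‖ξ - ξs‖ + ‖η - ηs‖ < δ →
        ∀ (X : EuclideanSpace ℝ (Fin (d + 1))) (Y : EuclideanSpace ℝ (Fin (n + 1))),
          X 0 + Y 0 = 0 → ‖X‖ + ‖Y‖ ≤ R →
          ∀ τ : ℝ, τ₀ ≤ τ →
            ε * τ ≤ |(inner ℝ (X + τ • θ) ξ : ℝ) - (inner ℝ (Y + τ • ω) η : ℝ)| :=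
  phase_lower_bound_near_C1_general d n θ ω hθ hω hnontang ξs ηs h0 h0ne hbarξ hbarη τ₀ R hτ₀ hR
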